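/- arXiv:2003.05425 — 2 statements merged into one kernel-verified Lean document; each statement's English description precedes it below -/
import Mathlib

section
/- Cosine-coefficient equivariance error bound for the regular nonlinearity: for every δ with 0 ≤ δ ≤ 1 and every integer m ≥ 1, | (2/N) Σ_{t=0}^{N−1} cos(2π m t / N) · y(t + δ) − (2/N) Σ_{t=0}^{N−1} cos(2π m (t − δ) / N) · y(t) | ≤ (4π L_f / N) · ( ‖∂x‖₁ + m · ‖x‖₁ ). -/
open Finset Real

/-!
Termwise, `cos(ωt) y(t+δ) - cos(ω(t-δ)) y(t) = cos(ωt) (y(t+δ) - y(t)) + (cos(ωt) - cos(ω(t-δ))) y(t)`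
with `ω = 2πm/N`. Since `f` is `L_f`-Lipschitz and the `k`-th harmonic of `x` is `2πk/N`-Lipschitz, the
first part is at most `L_f (2π/N) ‖∂x‖₁`; since `cos` is 1-Lipschitz and `|y| ≤ L_f ‖x‖₁` (as `f 0 = 0`),
the second is at most `(2πm/N) L_f ‖x‖₁`. The normalised sum `(2/N) ∑_{t<N}` doubles this termwise bound.
-/

lemma abs_mul_sub_mul_le (c₁ c₂ y₁ y₂ : ℝ) :
    |c₁ * y₁ - c₂ * y₂| ≤ |c₁| * |y₁ - y₂| + |c₁ - c₂| * |y₂| := by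
  calc |c₁ * y₁ - c₂ * y₂| = |c₁ * (y₁ - y₂) + (c₁ - c₂) * y₂| := by ring_nf
    _ ≤ |c₁| * |y₁ - y₂| + |c₁ - c₂| * |y₂| := by
      simpa only [abs_mul] using abs_add_le (c₁ * (y₁ - y₂)) ((c₁ - c₂) * y₂)

lemma abs_le_mul_abs_of_lipschitz {f : ℝ → ℝ} {L : ℝ}
    (hf : ∀ a b : ℝ, |f a - f b| ≤ L * |a - b|) (hf0 : f 0 = 0) (a : ℝ) :
    |f a| ≤ L * |a| := by
  simpa [hf0] using hf a 0

lemma abs_mul_cos_add_mul_sin_le (a b θ : ℝ) : |a * cos θ + b * sin θ| ≤ |a| + |b| := by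
  refine (abs_add_le _ _).trans (add_le_add ?_ ?_) <;> rw [abs_mul]
  · exact mul_le_of_le_one_right (abs_nonneg a) (abs_cos_le_one θ)
  · exact mul_le_of_le_one_right (abs_nonneg b) (abs_sin_le_one θ)

lemma abs_mul_cos_add_mul_sin_sub_le (a b θ φ : ℝ) :
    |(a * cos θ + b * sin θ) - (a * cos φ + b * sin φ)| ≤ (|a| + |b|) * |θ - φ| := by
  calc |(a * cos θ + b * sin θ) - (a * cos φ + b * sin φ)|
      = |a * (cos θ - cos φ) + b * (sin θ - sin φ)| := by ring_nf
    _ ≤ |a| * |cos θ - cos φ| + |b| * |sin θ - sin φ| := by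
      simpa only [abs_mul] using abs_add_le (a * (cos θ - cos φ)) (b * (sin θ - sin φ))
    _ ≤ |a| * |θ - φ| + |b| * |θ - φ| :=
      add_le_add (mul_le_mul_of_nonneg_left (abs_cos_sub_cos_le θ φ) (abs_nonneg a))
        (mul_le_mul_of_nonneg_left (abs_sin_sub_sin_le θ φ) (abs_nonneg b))
    _ = (|a| + |b|) * |θ - φ| := by ring

noncomputable def harmonicSum (s : Finset ℕ) (c₀ ω : ℝ) (a b : ℕ → ℝ) (t : ℝ) : ℝ :=
  c₀ + ∑ k ∈ s, (a k * cos (ω * k * t) + b k * sin (ω * k * t))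

section harmonicSum

variable (s : Finset ℕ) (c₀ ω : ℝ) (a b : ℕ → ℝ)

lemma abs_harmonicSum_le (t : ℝ) :
    |harmonicSum s c₀ ω a b t| ≤ |c₀| + ∑ k ∈ s, (|a k| + |b k|) :=
  (abs_add_le _ _).trans <| add_le_add_right ((abs_sum_le_sum_abs _ _).trans <|
    sum_le_sum fun k _ => abs_mul_cos_add_mul_sin_le (a k) (b k) _) _

lemma abs_harmonicSum_sub_le (t u : ℝ) :
    |harmonicSum s c₀ ω a b t - harmonicSum s c₀ ω a b u|
      ≤ |ω * (t - u)| * ∑ k ∈ s, k * (|a k| + |b k|) := by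
  rw [harmonicSum, harmonicSum, add_sub_add_left_eq_sub, ← sum_sub_distrib, mul_sum]
  refine (abs_sum_le_sum_abs _ _).trans (sum_le_sum fun k _ => ?_)
  calc _ ≤ (|a k| + |b k|) * |ω * k * t - ω * k * u| := abs_mul_cos_add_mul_sin_sub_le _ _ _ _
    _ = |ω * (t - u)| * (k * (|a k| + |b k|)) := by
      rw [show ω * k * t - ω * k * u = k * (ω * (t - u)) by ring, abs_mul, Nat.abs_cast]
      ring

end harmonicSum

lemma abs_cos_mul_shift_sub_cos_mul_le (g : ℝ → ℝ) (ω t δ : ℝ) :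
    |cos (ω * t) * g (t + δ) - cos (ω * (t - δ)) * g t|
      ≤ |g (t + δ) - g t| + |ω * δ| * |g t| := by
  refine (abs_mul_sub_mul_le _ _ _ _).trans (add_le_add ?_ ?_)
  · exact mul_le_of_le_one_left (abs_nonneg _) (abs_cos_le_one _)
  · refine mul_le_mul_of_nonneg_right ?_ (abs_nonneg _)
    simpa only [mul_sub, sub_sub_cancel] using abs_cos_sub_cos_le (ω * t) (ω * (t - δ))

lemma abs_div_mul_sum_range_sub_le {N : ℕ} {g h : ℕ → ℝ} {c C : ℝ} (hc : 0 ≤ c) (hC : 0 ≤ C)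
    (hgh : ∀ t, |g t - h t| ≤ C) :
    |c / N * ∑ t ∈ range N, g t - c / N * ∑ t ∈ range N, h t| ≤ c * C := by
  rcases N.eq_zero_or_pos with rfl | hN
  · simpa using mul_nonneg hc hC
  rw [← mul_sub, ← sum_sub_distrib, abs_mul, abs_of_nonneg (by positivity)]
  calc c / N * |∑ t ∈ range N, (g t - h t)| ≤ c / N * (N * C) := by
        gcongr
        simpa using abs_sum_le_sum_abs (fun t => g t - h t) (range N) |>.trans
          (sum_le_sum fun t _ => hgh t)
    _ = c * C := by field_simp

theorem cosine_coefficient_equivariance_error_bound_general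
    (N B : ℕ)
    (x0 : ℝ) (xa xb : ℕ → ℝ) (x : ℝ → ℝ)
    (hx : ∀ t : ℝ, x t = x0 + ∑ m ∈ Finset.Icc 1 B,
      (xa m * Real.cos (2 * Real.pi * m * t / N)
        + xb m * Real.sin (2 * Real.pi * m * t / N)))
    (f : ℝ → ℝ) (Lf : ℝ) (hLf : 0 ≤ Lf)
    (hf : ∀ a b : ℝ, |f a - f b| ≤ Lf * |a - b|) (hf0 : f 0 = 0)
    (y : ℝ → ℝ) (hy : ∀ t : ℝ, y t = f (x t)) :
    ∀ (δ : ℝ), 0 ≤ δ → δ ≤ 1 → ∀ m : ℕ, 1 ≤ m →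
      |(2 / (N : ℝ)) * (∑ t ∈ Finset.range N,
            Real.cos (2 * Real.pi * m * t / N) * y ((t : ℝ) + δ))
        - (2 / (N : ℝ)) * (∑ t ∈ Finset.range N,
            Real.cos (2 * Real.pi * m * ((t : ℝ) - δ) / N) * y t)|
      ≤ (4 * Real.pi * Lf / N) *
          ((∑ k ∈ Finset.Icc 1 B, (k : ℝ) * (|xa k| + |xb k|))
            + (m : ℝ) * (|x0| + ∑ k ∈ Finset.Icc 1 B, (|xa k| + |xb k|))) := by
  intro δ hδ0 hδ1 m _
  set S₁ := ∑ k ∈ Icc 1 B, (k : ℝ) * (|xa k| + |xb k|)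
  set S₂ := |x0| + ∑ k ∈ Icc 1 B, (|xa k| + |xb k|)
  have hx' : x = harmonicSum (Icc 1 B) x0 (2 * π / N) xa xb :=
    funext fun t => by simp only [hx, harmonicSum, div_mul_eq_mul_div]
  have hωδ : |2 * π / N * δ| ≤ 2 * π / N := by
    rw [abs_of_nonneg (by positivity)]
    exact mul_le_of_le_one_right (by positivity) hδ1
  have hy_le (t : ℝ) : |y t| ≤ Lf * S₂ := by
    rw [hy, hx']
    exact (abs_le_mul_abs_of_lipschitz hf hf0 _).trans
      (mul_le_mul_of_nonneg_left (abs_harmonicSum_le ..) hLf)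
  have hy_shift (t : ℝ) : |y (t + δ) - y t| ≤ Lf * (2 * π / N * S₁) := by
    rw [hy, hy, hx']
    refine (hf _ _).trans (mul_le_mul_of_nonneg_left ?_ hLf)
    refine (abs_harmonicSum_sub_le ..).trans ?_
    rw [add_sub_cancel_left]
    exact mul_le_mul_of_nonneg_right hωδ (sum_nonneg fun k _ => by positivity)
  have hterm (t : ℕ) : |cos (2 * π * m * t / N) * y (t + δ)
      - cos (2 * π * m * (t - δ) / N) * y t| ≤ 2 * π / N * Lf * (S₁ + m * S₂) := by
    calc _ ≤ |y (t + δ) - y t| + |2 * π * m / N * δ| * |y t| := by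
          simpa only [div_mul_eq_mul_div] using
            abs_cos_mul_shift_sub_cos_mul_le y (2 * π * m / N) t δ
      _ ≤ Lf * (2 * π / N * S₁) + m * (2 * π / N) * (Lf * S₂) := by
          rw [show 2 * π * m / N * δ = m * (2 * π / N * δ) by ring, abs_mul, Nat.abs_cast]
          gcongr
          exacts [hy_shift t, hy_le t]
      _ = 2 * π / N * Lf * (S₁ + m * S₂) := by ring
  calc _ ≤ 2 * (2 * π / N * Lf * (S₁ + m * S₂)) :=
        abs_div_mul_sum_range_sub_le two_pos.le (by positivity) hterm
    _ = _ := by ring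

/-- cos-coefficient equivariance error bound for the regular
nonlinearity. -/
theorem cosine_coefficient_equivariance_error_bound
    (N B : ℕ) (hN : 1 ≤ N) (hB : 1 ≤ B)
    (x0 : ℝ) (xa xb : ℕ → ℝ) (x : ℝ → ℝ)
    (hx : ∀ t : ℝ, x t = x0 + ∑ m ∈ Finset.Icc 1 B,
      (xa m * Real.cos (2 * Real.pi * m * t / N)
        + xb m * Real.sin (2 * Real.pi * m * t / N)))
    (f : ℝ → ℝ) (Lf : ℝ) (hLf : 0 ≤ Lf)
    (hf : ∀ a b : ℝ, |f a - f b| ≤ Lf * |a - b|) (hf0 : f 0 = 0)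
    (y : ℝ → ℝ) (hy : ∀ t : ℝ, y t = f (x t)) :
    ∀ (δ : ℝ), 0 ≤ δ → δ ≤ 1 → ∀ m : ℕ, 1 ≤ m →
      |(2 / (N : ℝ)) * (∑ t ∈ Finset.range N,
            Real.cos (2 * Real.pi * m * t / N) * y ((t : ℝ) + δ))
        - (2 / (N : ℝ)) * (∑ t ∈ Finset.range N,
            Real.cos (2 * Real.pi * m * ((t : ℝ) - δ) / N) * y t)|
      ≤ (4 * Real.pi * Lf / N) *
          ((∑ k ∈ Finset.Icc 1 B, (k : ℝ) * (|xa k| + |xb k|))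
            + (m : ℝ) * (|x0| + ∑ k ∈ Finset.Icc 1 B, (|xa k| + |xb k|))) :=
  cosine_coefficient_equivariance_error_bound_general N B x0 xa xb x hx f Lf hLf hf hf0 y hy
end

section
/- The regular nonlinearity becomes exactly gauge equivariant in the limit of infinitely many samples: with the band limits B, B', the coefficients x₀, x_α, x_β, the nonlinearity f, and δ ∈ [0, 1] held fixed, the total ℓ¹ equivariance error E(N) = |z₀^{FT} − z₀^{TF}| + Σ_{m=1}^{B'} ( |z_α^{FT}(m) − z_α^{TF}(m)| + |z_β^{FT}(m) − z_β^{TF}(m)| ), viewed as a function of the number of samples N, tends to 0 as N → ∞. -/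
/-!
Sampling `x_N` at `t + δ` instead of `t` moves its argument by at most `1`, and `x_N` varies on
the scale `N` (it is `O(1/N)`-Lipschitz), so `y_N = f ∘ x_N` changes by `O(1/N)` at every sample,
uniformly in `t`; the same holds for the phase `2π m t / N` of each analysing cosine and sine.
Each of the finitely many coefficient errors is an average of such pointwise differences, hence
`O(1/N)`.
-/

open Finset Real Filter

noncomputable def bandLimitedSignal (B : ℕ) (x0 : ℝ) (xa xb : ℕ → ℝ) (N : ℕ) (t : ℝ) : ℝ :=
  x0 + ∑ m ∈ Icc 1 B, (xa m * cos (2 * π * m * t / N) + xb m * sin (2 * π * m * t / N))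

lemma abs_sub_comp_scale_le {w : ℝ → ℝ} (hw : ∀ a b, |w a - w b| ≤ |a - b|) {c d : ℝ}
    (hc : 0 ≤ c) (hd : 0 ≤ d) (t s : ℝ) :
    |w (c * t / d) - w (c * s / d)| ≤ c / d * |t - s| := by
  calc |w (c * t / d) - w (c * s / d)| ≤ |c / d * (t - s)| := (hw _ _).trans_eq (by ring_nf)
    _ = c / d * |t - s| := by rw [abs_mul, abs_of_nonneg (div_nonneg hc hd)]

lemma abs_mul_sub_mul_le_s19 {p q u v M : ℝ} (hq : |q| ≤ 1) (hu : |u| ≤ M) :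
    |p * u - q * v| ≤ |p - q| * M + |u - v| := by
  calc |p * u - q * v| = |(p - q) * u + q * (u - v)| := by ring_nf
    _ ≤ |p - q| * |u| + |q| * |u - v| := by
      rw [← abs_mul, ← abs_mul]; exact abs_add_le _ _
    _ ≤ |p - q| * M + 1 * |u - v| := by gcongr
    _ = |p - q| * M + |u - v| := by rw [one_mul]

lemma abs_mul_sum_sub_mul_sum_le {N : ℕ} (hN : 0 < N) {a ε : ℝ} (ha : 0 ≤ a) {F G : ℕ → ℝ}
    (h : ∀ t ∈ range N, |F t - G t| ≤ ε) :
    |a / N * ∑ t ∈ range N, F t - a / N * ∑ t ∈ range N, G t| ≤ a * ε := by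
  have hN' : (0 : ℝ) < N := Nat.cast_pos.mpr hN
  rw [← mul_sub, ← sum_sub_distrib, abs_mul, abs_of_nonneg (by positivity)]
  calc a / N * |∑ t ∈ range N, (F t - G t)| ≤ a / N * (N * ε) := by
        gcongr
        refine (abs_sum_le_sum_abs _ _).trans ?_
        simpa using sum_le_card_nsmul _ _ _ h
    _ = a * ε := by field_simp

lemma tendsto_abs_mul_sum_sub_mul_sum {a C : ℝ} (ha : 0 ≤ a) {F G : ℕ → ℕ → ℝ}
    (h : ∀ N t, |F N t - G N t| ≤ C / N) :
    Tendsto (fun N : ℕ => |a / N * ∑ t ∈ range N, F N t - a / N * ∑ t ∈ range N, G N t|)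
      atTop (nhds 0) := by
  refine squeeze_zero' (.of_forall fun _ => abs_nonneg _) ?_
    (by simpa using (tendsto_const_div_atTop_nhds_zero_nat C).const_mul a)
  filter_upwards [eventually_gt_atTop 0] with N hN
  exact abs_mul_sum_sub_mul_sum_le hN ha fun t _ => h N t

section SampledSignal

variable {Y : ℕ → ℝ → ℝ} {M K δ : ℝ}

lemma abs_shift_sub_le (hK : 0 ≤ K) (hY : ∀ N t s, |Y N t - Y N s| ≤ K / N * |t - s|)
    (hδ0 : 0 ≤ δ) (hδ1 : δ ≤ 1) (N : ℕ) (t : ℝ) : |Y N (t + δ) - Y N t| ≤ K / N := by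
  calc |Y N (t + δ) - Y N t| ≤ K / N * δ := by simpa [abs_of_nonneg hδ0] using hY N (t + δ) t
    _ ≤ K / N := mul_le_of_le_one_right (by positivity) hδ1

lemma tendsto_mean_shift_error (hK : 0 ≤ K) (hY : ∀ N t s, |Y N t - Y N s| ≤ K / N * |t - s|)
    (hδ0 : 0 ≤ δ) (hδ1 : δ ≤ 1) :
    Tendsto (fun N : ℕ =>
        |1 / N * ∑ t ∈ range N, Y N (t + δ) - 1 / N * ∑ t ∈ range N, Y N t|) atTop (nhds 0) :=
  tendsto_abs_mul_sum_sub_mul_sum zero_le_one fun N t => abs_shift_sub_le hK hY hδ0 hδ1 N t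

lemma tendsto_coeff_shift_error (hYb : ∀ N t, |Y N t| ≤ M) (hK : 0 ≤ K)
    (hY : ∀ N t s, |Y N t - Y N s| ≤ K / N * |t - s|) (hδ0 : 0 ≤ δ) (hδ1 : δ ≤ 1)
    {w : ℝ → ℝ} (hw : ∀ a b, |w a - w b| ≤ |a - b|) (hw1 : ∀ a, |w a| ≤ 1)
    {c a : ℝ} (hc : 0 ≤ c) (ha : 0 ≤ a) :
    Tendsto (fun N : ℕ =>
        |a / N * ∑ t ∈ range N, w (c * t / N) * Y N (t + δ)
          - a / N * ∑ t ∈ range N, w (c * (t - δ) / N) * Y N t|) atTop (nhds 0) := by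
  refine tendsto_abs_mul_sum_sub_mul_sum (C := c * M + K) ha fun N t => ?_
  have hM : 0 ≤ M := (abs_nonneg _).trans (hYb 0 0)
  have hphase : |w (c * t / N) - w (c * (t - δ) / N)| ≤ c / N := by
    refine (abs_sub_comp_scale_le hw hc N.cast_nonneg _ _).trans ?_
    rw [sub_sub_cancel, abs_of_nonneg hδ0]
    exact mul_le_of_le_one_right (by positivity) hδ1
  calc |w (c * t / N) * Y N (t + δ) - w (c * (t - δ) / N) * Y N t|
      ≤ |w (c * t / N) - w (c * (t - δ) / N)| * M + |Y N (t + δ) - Y N t| :=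
        abs_mul_sub_mul_le_s19 (hw1 _) (hYb _ _)
    _ ≤ c / N * M + K / N := by
        gcongr
        exact abs_shift_sub_le hK hY hδ0 hδ1 N t
    _ = (c * M + K) / N := by ring

end SampledSignal

section BandLimitedSignal

variable (B : ℕ) (x0 : ℝ) (xa xb : ℕ → ℝ)

lemma abs_bandLimitedSignal_le (N : ℕ) (t : ℝ) :
    |bandLimitedSignal B x0 xa xb N t| ≤ |x0| + ∑ m ∈ Icc 1 B, (|xa m| + |xb m|) := by
  refine (abs_add_le _ _).trans (add_le_add_right ((abs_sum_le_sum_abs _ _).trans ?_) _)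
  refine sum_le_sum fun m _ => (abs_add_le _ _).trans ?_
  rw [abs_mul, abs_mul]
  exact add_le_add (mul_le_of_le_one_right (abs_nonneg _) (abs_cos_le_one _))
    (mul_le_of_le_one_right (abs_nonneg _) (abs_sin_le_one _))

lemma abs_bandLimitedSignal_sub_le (N : ℕ) (t s : ℝ) :
    |bandLimitedSignal B x0 xa xb N t - bandLimitedSignal B x0 xa xb N s|
      ≤ 2 * π * (∑ m ∈ Icc 1 B, m * (|xa m| + |xb m|)) / N * |t - s| := by
  have hterm : ∀ m ∈ Icc 1 B,
      |xa m * cos (2 * π * m * t / N) + xb m * sin (2 * π * m * t / N)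
        - (xa m * cos (2 * π * m * s / N) + xb m * sin (2 * π * m * s / N))|
      ≤ 2 * π * (m * (|xa m| + |xb m|)) / N * |t - s| := fun m _ => by
    have hc : (0 : ℝ) ≤ 2 * π * m := by positivity
    have hcos := abs_sub_comp_scale_le abs_cos_sub_cos_le hc N.cast_nonneg t s
    have hsin := abs_sub_comp_scale_le abs_sin_sub_sin_le hc N.cast_nonneg t s
    calc _ = |xa m * (cos (2 * π * m * t / N) - cos (2 * π * m * s / N))
            + xb m * (sin (2 * π * m * t / N) - sin (2 * π * m * s / N))| := by ring_nf
      _ ≤ |xa m| * (2 * π * m / N * |t - s|) + |xb m| * (2 * π * m / N * |t - s|) := by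
        refine (abs_add_le _ _).trans ?_
        rw [abs_mul, abs_mul]
        gcongr
      _ = 2 * π * (m * (|xa m| + |xb m|)) / N * |t - s| := by ring
  calc _ = |∑ m ∈ Icc 1 B,
          (xa m * cos (2 * π * m * t / N) + xb m * sin (2 * π * m * t / N)
            - (xa m * cos (2 * π * m * s / N) + xb m * sin (2 * π * m * s / N)))| := by
        rw [bandLimitedSignal, bandLimitedSignal, add_sub_add_left_eq_sub, sum_sub_distrib]
    _ ≤ _ := (abs_sum_le_sum_abs _ _).trans (sum_le_sum hterm)
    _ = _ := by rw [mul_sum, sum_div, sum_mul]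

end BandLimitedSignal

theorem regular_nonlinearity_equivariant_in_limit_general
    (B B' : ℕ)
    (x0 : ℝ) (xa xb : ℕ → ℝ)
    (f : ℝ → ℝ) (Lf : ℝ) (hLf : 0 ≤ Lf)
    (hf : ∀ a b : ℝ, |f a - f b| ≤ Lf * |a - b|) (hf0 : f 0 = 0)
    (δ : ℝ) (hδ0 : 0 ≤ δ) (hδ1 : δ ≤ 1) :
    Filter.Tendsto
      (fun N : ℕ =>
        let x : ℝ → ℝ := fun t => x0 + ∑ m ∈ Finset.Icc 1 B,
          (xa m * Real.cos (2 * Real.pi * m * t / N)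
            + xb m * Real.sin (2 * Real.pi * m * t / N));
        let y : ℝ → ℝ := fun t => f (x t);
        |(1 / (N : ℝ)) * (∑ t ∈ Finset.range N, y ((t : ℝ) + δ))
            - (1 / (N : ℝ)) * (∑ t ∈ Finset.range N, y (t : ℝ))|
          + ∑ m ∈ Finset.Icc 1 B',
              (|(2 / (N : ℝ)) * (∑ t ∈ Finset.range N,
                    Real.cos (2 * Real.pi * m * t / N) * y ((t : ℝ) + δ))
                - (2 / (N : ℝ)) * (∑ t ∈ Finset.range N,
                    Real.cos (2 * Real.pi * m * ((t : ℝ) - δ) / N) * y t)|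
              + |(2 / (N : ℝ)) * (∑ t ∈ Finset.range N,
                    Real.sin (2 * Real.pi * m * t / N) * y ((t : ℝ) + δ))
                - (2 / (N : ℝ)) * (∑ t ∈ Finset.range N,
                    Real.sin (2 * Real.pi * m * ((t : ℝ) - δ) / N) * y t)|))
      Filter.atTop (nhds 0) := by
  set y : ℕ → ℝ → ℝ := fun N t => f (bandLimitedSignal B x0 xa xb N t)
  have hy_bound : ∀ N t, |y N t| ≤ Lf * (|x0| + ∑ m ∈ Icc 1 B, (|xa m| + |xb m|)) := fun N t => by
    have := hf (bandLimitedSignal B x0 xa xb N t) 0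
    rw [hf0, sub_zero, sub_zero] at this
    exact this.trans (mul_le_mul_of_nonneg_left (abs_bandLimitedSignal_le ..) hLf)
  have hy_lip : ∀ N t s, |y N t - y N s|
      ≤ Lf * (2 * π * ∑ m ∈ Icc 1 B, m * (|xa m| + |xb m|)) / N * |t - s| := fun N t s =>
    (hf _ _).trans <| (mul_le_mul_of_nonneg_left (abs_bandLimitedSignal_sub_le ..) hLf).trans_eq
      (by ring)
  have hK : 0 ≤ Lf * (2 * π * ∑ m ∈ Icc 1 B, m * (|xa m| + |xb m|)) := by positivity
  have hcoeff := fun {w : ℝ → ℝ} (hw : ∀ a b, |w a - w b| ≤ |a - b|) (hw1 : ∀ a, |w a| ≤ 1)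
      (m : ℕ) => tendsto_coeff_shift_error hy_bound hK hy_lip hδ0 hδ1 hw hw1
        (by positivity : (0 : ℝ) ≤ 2 * π * m) zero_le_two
  have hlim := (tendsto_mean_shift_error hK hy_lip hδ0 hδ1).add <| tendsto_finsetSum (Icc 1 B') fun m _ =>
    (hcoeff abs_cos_sub_cos_le abs_cos_le_one m).add (hcoeff abs_sin_sub_sin_le abs_sin_le_one m)
  rw [add_zero, sum_const_zero, add_zero] at hlim
  exact hlim

/-- the regular nonlinearity becomes exactly gauge equivariant
in the limit of infinitely many samples: the total ℓ¹ equivariance error,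
as a function of the number of samples `N`, tends to `0` as `N → ∞`. -/
theorem regular_nonlinearity_equivariant_in_limit
    (B B' : ℕ) (hB : 1 ≤ B) (hB' : 1 ≤ B')
    (x0 : ℝ) (xa xb : ℕ → ℝ)
    (f : ℝ → ℝ) (Lf : ℝ) (hLf : 0 ≤ Lf)
    (hf : ∀ a b : ℝ, |f a - f b| ≤ Lf * |a - b|) (hf0 : f 0 = 0)
    (δ : ℝ) (hδ0 : 0 ≤ δ) (hδ1 : δ ≤ 1) :
    Filter.Tendsto
      (fun N : ℕ =>
        let x : ℝ → ℝ := fun t => x0 + ∑ m ∈ Finset.Icc 1 B,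
          (xa m * Real.cos (2 * Real.pi * m * t / N)
            + xb m * Real.sin (2 * Real.pi * m * t / N));
        let y : ℝ → ℝ := fun t => f (x t);
        |(1 / (N : ℝ)) * (∑ t ∈ Finset.range N, y ((t : ℝ) + δ))
            - (1 / (N : ℝ)) * (∑ t ∈ Finset.range N, y (t : ℝ))|
          + ∑ m ∈ Finset.Icc 1 B',
              (|(2 / (N : ℝ)) * (∑ t ∈ Finset.range N,
                    Real.cos (2 * Real.pi * m * t / N) * y ((t : ℝ) + δ))
                - (2 / (N : ℝ)) * (∑ t ∈ Finset.range N,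
                    Real.cos (2 * Real.pi * m * ((t : ℝ) - δ) / N) * y t)|
              + |(2 / (N : ℝ)) * (∑ t ∈ Finset.range N,
                    Real.sin (2 * Real.pi * m * t / N) * y ((t : ℝ) + δ))
                - (2 / (N : ℝ)) * (∑ t ∈ Finset.range N,
                    Real.sin (2 * Real.pi * m * ((t : ℝ) - δ) / N) * y t)|))
      Filter.atTop (nhds 0) :=
  regular_nonlinearity_equivariant_in_limit_general B B' x0 xa xb f Lf hLf hf hf0 δ hδ0 hδ1
end
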